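/- arXiv:1108.5295 — 5 statements merged into one kernel-verified Lean document; each statement's English description precedes it below -/
import Mathlib

section
/- The ~-closure of a regular language need not be regular: for the alphabet with Act_1 = {a} and Act_2 = {b} (two ports), the ~-closure of the regular language (ab)* ∪ (ab)*a is the set of all words w such that |w|_a - |w|_b ∈ {0,1} ... and this closure intersected with b*a* equals { b^m a^k : k = m or k = m+1 }, which is not regular; hence the ~-closure is not regular. -/
/-- Two ports with singleton alphabets: event `true` (= `a`) at port 1,
event `false` (= `b`) at port 2. -/
def proj (p : Bool) (σ : List Bool) : List Bool :=
  σ.filter (fun a => a = p)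

def traceEquiv (σ σ' : List Bool) : Prop :=
  ∀ p : Bool, proj p σ = proj p σ'

/-- The regular language `(ab)* ∪ (ab)*a`. -/
def Lreg : Language Bool :=
  { w | ∃ m : ℕ, w = (List.replicate m [true, false]).flatten ∨
        w = (List.replicate m [true, false]).flatten ++ [true] }

/-- The `~`-closure of `Lreg`. -/
def closLreg : Language Bool := { w | ∃ w' ∈ Lreg, traceEquiv w w' }

/-!
A language is regular iff it has finitely many left quotients (Myhill–Nerode). `Lreg` has only
three: itself, its quotient by `a`, and `∅`. Since each port alphabet is a singleton, `~` only
remembers the numbers of `a`s and `b`s, so a word lies in the closure iff `|w|_a - |w|_b ∈ {0, 1}`.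
Then `a^n` lies in the quotient of the closure by `b^m` iff `n ∈ {m, m + 1}`, so the quotients by
the words `b^m` are pairwise distinct.
-/

namespace Language

variable {α : Type*}

theorem isRegular_of_finite_of_leftQuotient_mem {L : Language α} {S : Set (Language α)}
    (hS : S.Finite) (hL : L ∈ S) (hquot : ∀ K ∈ S, ∀ a, K.leftQuotient [a] ∈ S) :
    L.IsRegular := by
  refine IsRegular.of_finite_range_leftQuotient (hS.subset ?_)
  rintro _ ⟨x, rfl⟩
  induction x generalizing L with
  | nil => exact hL
  | cons a x ih =>
    rw [← List.singleton_append, leftQuotient_append]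
    exact ih (hquot L hL a)

theorem not_isRegular_of_injective_leftQuotient {L : Language α} (f : ℕ → List α)
    (hf : Function.Injective (L.leftQuotient ∘ f)) : ¬ L.IsRegular := fun h =>
  (Set.infinite_range_of_injective hf).mono (Set.range_comp_subset_range _ _)
    h.finite_range_leftQuotient

@[simp]
theorem zero_leftQuotient (x : List α) : (0 : Language α).leftQuotient x = 0 := by
  ext y
  simp only [mem_leftQuotient, notMem_zero]

end Language

open Language

theorem Lreg_leftQuotient_false : Lreg.leftQuotient [false] = 0 := by
  ext w
  simp only [mem_leftQuotient, notMem_zero, iff_false]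
  rintro ⟨_ | m, h | h⟩ <;> simp [List.replicate_succ] at h

theorem Lreg_leftQuotient_true_true : (Lreg.leftQuotient [true]).leftQuotient [true] = 0 := by
  ext w
  simp only [mem_leftQuotient, notMem_zero, iff_false]
  rintro ⟨_ | m, h | h⟩ <;> simp [List.replicate_succ] at h

theorem Lreg_leftQuotient_true_false : (Lreg.leftQuotient [true]).leftQuotient [false] = Lreg := by
  ext w
  simp only [mem_leftQuotient]
  constructor
  · rintro ⟨_ | m, h | h⟩
    all_goals simp [List.replicate_succ] at h
    exacts [⟨m, Or.inl h⟩, ⟨m, Or.inr h⟩]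
  · rintro ⟨m, rfl | rfl⟩
    exacts [⟨m + 1, Or.inl (by simp [List.replicate_succ])⟩,
      ⟨m + 1, Or.inr (by simp [List.replicate_succ])⟩]

theorem Lreg_isRegular : Lreg.IsRegular := by
  refine isRegular_of_finite_of_leftQuotient_mem (S := {Lreg, Lreg.leftQuotient [true], 0})
    (by simp) (by simp) ?_
  rintro K (rfl | rfl | rfl) (_ | _) <;>
    simp [Lreg_leftQuotient_false, Lreg_leftQuotient_true_true, Lreg_leftQuotient_true_false]

theorem traceEquiv_iff_count_eq {w w' : List Bool} :
    traceEquiv w w' ↔ ∀ p, w.count p = w'.count p := by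
  simp only [traceEquiv, proj, List.filter_eq, List.replicate_inj]
  grind

theorem mem_closLreg_iff {w : List Bool} :
    w ∈ closLreg ↔ w.count true = w.count false ∨ w.count true = w.count false + 1 := by
  simp only [closLreg, Lreg, traceEquiv_iff_count_eq]
  constructor
  · rintro ⟨w', ⟨m, rfl | rfl⟩, hw⟩ <;> simp [hw, List.count_flatten]
  · rintro (h | h)
    · refine ⟨_, ⟨w.count false, Or.inl rfl⟩, ?_⟩
      rintro (_ | _) <;> simp [List.count_flatten, h]
    · refine ⟨_, ⟨w.count false, Or.inr rfl⟩, ?_⟩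
      rintro (_ | _) <;> simp [List.count_flatten, h]

theorem replicate_true_mem_closLreg_leftQuotient_iff {m n : ℕ} :
    List.replicate n true ∈ closLreg.leftQuotient (List.replicate m false) ↔
      n = m ∨ n = m + 1 := by
  simp [mem_closLreg_iff, List.count_replicate]

theorem closLreg_leftQuotient_replicate_false_injective :
    Function.Injective (closLreg.leftQuotient ∘ (List.replicate · false)) := by
  intro m n h
  have hquot (k : ℕ) : k = m ∨ k = m + 1 ↔ k = n ∨ k = n + 1 := by
    simpa only [Function.comp_apply, replicate_true_mem_closLreg_leftQuotient_iff] using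
      Iff.of_eq (congrArg (List.replicate k true ∈ ·) h)
  have := hquot m
  have := hquot n
  omega

/-- the `~`-closure of a regular language need not be regular:
`Lreg` is regular but its `~`-closure is not. -/
theorem closure_of_regular_not_regular :
    Lreg.IsRegular ∧ ¬ closLreg.IsRegular :=
  ⟨Lreg_isRegular,
    not_isRegular_of_injective_leftQuotient _ closLreg_leftQuotient_replicate_false_injective⟩
end

section
/- Multi-tape finite automata with all states final are closed under concatenation: given such automata N₁, N₂ with the same tapes and alphabets, there is a multi-tape FA M with all states final such that 𝓛(M) = 𝓛(N₁)·𝓛(N₂), where the product of tuples is componentwise concatenation. -/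
/-!
Run `N₁` on the left summand of `S₁ ⊕ S₂` and `N₂` on the right one, and let every state of
`N₁` also take the first move of `N₂` from `init₂`. Since all states are final, a path of
the combined automaton is an accepting run of `N₁` followed by an accepting run of `N₂`, and
the per-tape projection of a concatenated word is the concatenation of the projections.
-/

/-- Paths in a (nondeterministic) automaton with transition relation `h`. -/
inductive IsPath {A S : Type} (h : S → A → S → Prop) : S → List A → S → Prop
  | nil (s : S) : IsPath h s [] s
  | cons {s : S} {a : A} {s' : S} {w : List A} {t : S} :
      h s a s' → IsPath h s' w t → IsPath h s (a :: w) t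

/-- The tuple language of a multi-tape FA in which all states are final:
a tuple `w : Fin r → List A` is accepted iff some word `σ` labels a path
from the initial state whose projection on each tape `i` is `w i`. -/
def TupleLang {A : Type} {r : ℕ} (tape : A → Fin r) {S : Type}
    (init : S) (h : S → A → S → Prop) : Set (Fin r → List A) :=
  { w | ∃ σ : List A, ∃ t : S, IsPath h init σ t ∧
      ∀ i : Fin r, σ.filter (fun a => tape a = i) = w i }

namespace IsPath

variable {A S : Type} {h : S → A → S → Prop}

theorem append {s m t : S} {σ τ : List A} (p : IsPath h s σ m) (q : IsPath h m τ t) :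
    IsPath h s (σ ++ τ) t := by
  induction p with
  | nil => exact q
  | cons hstep _ ih => exact .cons hstep (ih q)

theorem map {T : Type} {g : T → A → T → Prop} (f : S → T)
    (hf : ∀ s a s', h s a s' → g (f s) a (f s')) {s t : S} {σ : List A}
    (p : IsPath h s σ t) : IsPath g (f s) σ (f t) := by
  induction p with
  | nil => exact .nil _
  | cons hstep _ ih => exact .cons (hf _ _ _ hstep) ih

end IsPath

section Concat

variable {A S₁ S₂ : Type} (h₁ : S₁ → A → S₁ → Prop) (init₂ : S₂) (h₂ : S₂ → A → S₂ → Prop)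

def concatStep : S₁ ⊕ S₂ → A → S₁ ⊕ S₂ → Prop
  | .inl x, a, .inl y => h₁ x a y
  | .inl _, a, .inr y => h₂ init₂ a y
  | .inr x, a, .inr y => h₂ x a y
  | .inr _, _, .inl _ => False

variable {h₁ init₂ h₂}

theorem exists_isPath_of_isPath_concatStep_inr {s : S₂} {σ : List A} {t : S₁ ⊕ S₂}
    (p : IsPath (concatStep h₁ init₂ h₂) (.inr s) σ t) : ∃ t₂, IsPath h₂ s σ t₂ := by
  generalize hs : (Sum.inr s : S₁ ⊕ S₂) = s' at p
  induction p generalizing s with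
  | nil => exact ⟨s, .nil _⟩
  | @cons _ a s' _ _ hstep _ ih =>
    subst hs
    cases s' with
    | inl => exact hstep.elim
    | inr y =>
      obtain ⟨t₂, q⟩ := ih rfl
      exact ⟨t₂, .cons hstep q⟩

theorem exists_append_of_isPath_concatStep_inl {s : S₁} {σ : List A} {t : S₁ ⊕ S₂}
    (p : IsPath (concatStep h₁ init₂ h₂) (.inl s) σ t) :
    ∃ σ₁ σ₂, σ = σ₁ ++ σ₂ ∧ (∃ t₁, IsPath h₁ s σ₁ t₁) ∧ ∃ t₂, IsPath h₂ init₂ σ₂ t₂ := by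
  generalize hs : (Sum.inl s : S₁ ⊕ S₂) = s' at p
  induction p generalizing s with
  | nil => exact ⟨[], [], rfl, ⟨s, .nil _⟩, ⟨init₂, .nil _⟩⟩
  | @cons _ a s' w _ hstep rest ih =>
    subst hs
    cases s' with
    | inl y =>
      obtain ⟨σ₁, σ₂, rfl, ⟨t₁, p₁⟩, hp₂⟩ := ih rfl
      exact ⟨a :: σ₁, σ₂, rfl, ⟨t₁, .cons hstep p₁⟩, hp₂⟩
    | inr y =>
      obtain ⟨t₂, p₂⟩ := exists_isPath_of_isPath_concatStep_inr rest
      exact ⟨[], a :: w, rfl, ⟨s, .nil _⟩, ⟨t₂, .cons hstep p₂⟩⟩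

theorem exists_isPath_concatStep_append {s₁ t₁ : S₁} {t₂ : S₂} {σ₁ σ₂ : List A}
    (p₁ : IsPath h₁ s₁ σ₁ t₁) (p₂ : IsPath h₂ init₂ σ₂ t₂) :
    ∃ t, IsPath (concatStep h₁ init₂ h₂) (.inl s₁) (σ₁ ++ σ₂) t := by
  have run₁ : IsPath (concatStep h₁ init₂ h₂) (.inl s₁) σ₁ (.inl t₁) :=
    p₁.map Sum.inl fun _ _ _ h => h
  cases p₂ with
  | nil => exact ⟨.inl t₁, by rwa [List.append_nil]⟩
  | @cons _ a s' _ _ hstep rest =>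
    have run₂ : IsPath (concatStep h₁ init₂ h₂) (.inl t₁) (a :: _) (.inr t₂) :=
      .cons (show concatStep h₁ init₂ h₂ (.inl t₁) a (.inr s') from hstep)
        (rest.map Sum.inr fun _ _ _ h => h)
    exact ⟨.inr t₂, run₁.append run₂⟩

end Concat

/-- multi-tape FA with all states final are closed under
(componentwise) concatenation of tuple languages. -/
theorem mfa_concat_closed {A : Type} {r : ℕ} (tape : A → Fin r)
    {S₁ : Type} [Fintype S₁] (init₁ : S₁) (h₁ : S₁ → A → S₁ → Prop)
    {S₂ : Type} [Fintype S₂] (init₂ : S₂) (h₂ : S₂ → A → S₂ → Prop) :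
    ∃ (S : Type) (_ : Fintype S) (init : S) (h : S → A → S → Prop),
      TupleLang tape init h =
        { w | ∃ u ∈ TupleLang tape init₁ h₁, ∃ v ∈ TupleLang tape init₂ h₂,
            ∀ i : Fin r, w i = u i ++ v i } := by
  refine ⟨S₁ ⊕ S₂, inferInstance, .inl init₁, concatStep h₁ init₂ h₂, ?_⟩
  ext w
  constructor
  · rintro ⟨σ, t, p, hw⟩
    obtain ⟨σ₁, σ₂, rfl, ⟨t₁, p₁⟩, ⟨t₂, p₂⟩⟩ := exists_append_of_isPath_concatStep_inl p
    refine ⟨_, ⟨σ₁, t₁, p₁, fun _ => rfl⟩, _, ⟨σ₂, t₂, p₂, fun _ => rfl⟩, fun i => ?_⟩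
    rw [← hw i, List.filter_append]
  · rintro ⟨u, ⟨σ₁, t₁, p₁, hu⟩, v, ⟨σ₂, t₂, p₂, hv⟩, hw⟩
    obtain ⟨t, p⟩ := exists_isPath_concatStep_append p₁ p₂
    exact ⟨σ₁ ++ σ₂, t, p, fun i => by rw [List.filter_append, hu i, hv i, hw i]⟩
end

section
/- Multi-tape FA with all states final are not closed under intersection: with two tapes over alphabets {a₁} and {a₂}, there exist all-states-final automata N₁ and N₂ with 𝓛(N₁) the set of tuples arising from {ε, a₁, a₁a₂} and 𝓛(N₂) from {ε, a₂, a₂a₁}, such that no all-states-final multi-tape FA M has 𝓛(M) = 𝓛(N₁) ∩ 𝓛(N₂) = {(ε,ε), (a₁,a₂)}; any automaton accepting (a₁,a₂) must, being all-states-final, also accept (a₁,ε) or (ε,a₂). -/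
/-- The two-tape setting: alphabet `Fin 2`, letter `0` (= `a₁`) on tape `0`
and letter `1` (= `a₂`) on tape `1`. -/
def tape2 : Fin 2 → Fin 2 := id

/-!
An automaton whose states are all final accepts the projections of every prefix of each word
it reads. A word projecting to `(a₁, a₂)` starts with `a₁` or with `a₂`, so its one-letter
prefix projects to `(a₁, ε)` or `(ε, a₂)`, neither of which lies in `{(ε, ε), (a₁, a₂)}`.
The two automata whose languages intersect to that set read just the words `a₁a₂`
and `a₂a₁`.
-/

section TupleLang

variable {A S : Type} {r : ℕ}

def tupleOf (tape : A → Fin r) (σ : List A) : Fin r → List A :=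
  fun i => σ.filter (fun a => tape a = i)

theorem mem_tupleLang_iff {tape : A → Fin r} {init : S} {h : S → A → S → Prop}
    {w : Fin r → List A} :
    w ∈ TupleLang tape init h ↔ ∃ σ t, IsPath h init σ t ∧ tupleOf tape σ = w := by
  simp only [TupleLang, tupleOf, funext_iff]
  rfl

theorem IsPath.take {h : S → A → S → Prop} {s t : S} {σ : List A}
    (p : IsPath h s σ t) (n : ℕ) : ∃ u, IsPath h s (σ.take n) u := by
  induction p generalizing n with
  | nil s => exact ⟨s, by simpa using IsPath.nil s⟩
  | cons hs _ ih =>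
    cases n with
    | zero => exact ⟨_, IsPath.nil _⟩
    | succ n =>
      obtain ⟨u, p⟩ := ih n
      exact ⟨u, IsPath.cons hs p⟩

theorem exists_tupleOf_take_mem {tape : A → Fin r} {init : S} {h : S → A → S → Prop}
    {w : Fin r → List A} (hw : w ∈ TupleLang tape init h) :
    ∃ σ, tupleOf tape σ = w ∧ ∀ n, tupleOf tape (σ.take n) ∈ TupleLang tape init h := by
  obtain ⟨σ, t, p, rfl⟩ := mem_tupleLang_iff.mp hw
  refine ⟨σ, rfl, fun n => ?_⟩
  obtain ⟨u, q⟩ := p.take n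
  exact mem_tupleLang_iff.mpr ⟨_, u, q, rfl⟩

end TupleLang

section PrefixAutomaton

variable {A : Type}

/-- State `k` means that `u.take k` has been read. -/
def prefixStep (u : List A) (s : Fin (u.length + 1)) (a : A) (s' : Fin (u.length + 1)) :
    Prop :=
  u[s.val]? = some a ∧ s'.val = s.val + 1

theorem IsPath.prefix_drop {u : List A} {s t : Fin (u.length + 1)} {σ : List A}
    (p : IsPath (prefixStep u) s σ t) : σ <+: u.drop s := by
  induction p with
  | nil => exact List.nil_prefix
  | cons hs _ ih =>
    obtain ⟨hget, hsucc⟩ := hs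
    obtain ⟨hlt, rfl⟩ := List.getElem?_eq_some_iff.mp hget
    rw [List.drop_eq_getElem_cons hlt, ← hsucc]
    exact List.cons_prefix_cons.mpr ⟨rfl, ih⟩

theorem exists_isPath_prefixStep {u : List A} :
    ∀ {σ : List A} {s : Fin (u.length + 1)}, σ <+: u.drop s →
      ∃ t, IsPath (prefixStep u) s σ t
  | [], s, _ => ⟨s, IsPath.nil s⟩
  | a :: σ, s, hσ => by
    have hlt : s.val < u.length := by
      by_contra hge
      simp [List.drop_eq_nil_of_le (not_lt.mp hge)] at hσ
    rw [List.drop_eq_getElem_cons hlt, List.cons_prefix_cons] at hσ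
    obtain ⟨t, p⟩ := exists_isPath_prefixStep (s := ⟨s.val + 1, by omega⟩) hσ.2
    exact ⟨t, IsPath.cons ⟨by simp [hσ.1], rfl⟩ p⟩

theorem tupleLang_prefixStep {r : ℕ} (tape : A → Fin r) (u : List A) :
    TupleLang tape 0 (prefixStep u) = {w | ∃ σ ∈ u.inits, tupleOf tape σ = w} := by
  ext w
  simp only [mem_tupleLang_iff, List.mem_inits, Set.mem_ofPred_eq]
  constructor
  · rintro ⟨σ, t, p, rfl⟩
    exact ⟨σ, by simpa using p.prefix_drop, rfl⟩
  · rintro ⟨σ, hσ, rfl⟩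
    obtain ⟨t, p⟩ := exists_isPath_prefixStep (s := 0) (by simpa using hσ)
    exact ⟨σ, t, p, rfl⟩

theorem tupleLang_prefixStep_pair {r : ℕ} (tape : A → Fin r) (x y : A) :
    TupleLang tape 0 (prefixStep [x, y]) =
      {tupleOf tape [], tupleOf tape [x], tupleOf tape [x, y]} := by
  ext w
  simp [tupleLang_prefixStep, eq_comm]

end PrefixAutomaton

theorem tupleOf_singleton_notMem (a : Fin 2) :
    tupleOf tape2 [a] ∉ ({![[], []], ![[(0 : Fin 2)], [(1 : Fin 2)]]} : Set _) := by
  fin_cases a <;> simp [funext_iff, Fin.forall_fin_two, tupleOf, tape2]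

/-- multi-tape FA with all states final are not closed under
intersection: there are all-states-final automata with tuple languages coming
from `{ε, a₁, a₁a₂}` and `{ε, a₂, a₂a₁}`, whose intersection
`{(ε,ε), (a₁,a₂)}` is the tuple language of no all-states-final automaton. -/
theorem mfa_not_closed_inter :
    (∃ (S₁ : Type) (_ : Fintype S₁) (init₁ : S₁) (h₁ : S₁ → Fin 2 → S₁ → Prop),
        TupleLang tape2 init₁ h₁ =
          {![[], []], ![[(0 : Fin 2)], []], ![[(0 : Fin 2)], [(1 : Fin 2)]]}) ∧
    (∃ (S₂ : Type) (_ : Fintype S₂) (init₂ : S₂) (h₂ : S₂ → Fin 2 → S₂ → Prop),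
        TupleLang tape2 init₂ h₂ =
          {![[], []], ![[], [(1 : Fin 2)]], ![[(0 : Fin 2)], [(1 : Fin 2)]]}) ∧
    (∀ (S : Type) (init : S) (h : S → Fin 2 → S → Prop),
        TupleLang tape2 init h ≠ {![[], []], ![[(0 : Fin 2)], [(1 : Fin 2)]]}) := by
  refine ⟨⟨_, inferInstance, 0, prefixStep [0, 1], ?_⟩,
    ⟨_, inferInstance, 0, prefixStep [1, 0], ?_⟩, fun S init h hL => ?_⟩
  · rw [tupleLang_prefixStep_pair]
    congr <;> decide
  · rw [tupleLang_prefixStep_pair]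
    congr <;> decide
  have hmem : ![[(0 : Fin 2)], [(1 : Fin 2)]] ∈ TupleLang tape2 init h := by simp [hL]
  obtain ⟨σ, hσ, hprefix⟩ := exists_tupleOf_take_mem hmem
  cases σ with
  | nil => simpa [tupleOf] using congrFun hσ 0
  | cons a σ => exact tupleOf_singleton_notMem a (by simpa [hL] using hprefix 1)
end

section
/- For the FSM construction 𝓕: given r-tape FA N and M over the same alphabets, 𝓛(N) ⊆ 𝓛(M) if and only if 𝓕(N) ⊑_s 𝓕(M). -/
/-- The transition relation of the FSM `𝓕(N)` built from a multi-tape FA with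
transition relation `h`.  States are `Option S` (`none` is the sink `s_e`).
`FTrans h q z b q'` means: in state `q`, input `z` can produce output `b`
(at port `r+1`) and move to `q'`.  While following a path of `N` the output can
be `0` or `1`; once the path diverges (or from the sink) the output is `0`. -/
def FTrans {A S : Type} (h : S → A → S → Prop) :
    Option S → A → Bool → Option S → Prop
  | some s, z, _, some s' => h s z s'
  | some s, z, b, none => (¬ ∃ s', h s z s') ∧ b = false
  | none, _, b, none => b = false
  | none, _, _, some _ => False

/-- Paths of the FSM `𝓕(N)`: a global trace is a list of input/output pairs. -/
inductive FSMPath {A S : Type} (h : S → A → S → Prop) :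
    Option S → List (A × Bool) → Option S → Prop
  | nil (q : Option S) : FSMPath h q [] q
  | cons {q : Option S} {z : A} {b : Bool} {q' : Option S} {ρ : List (A × Bool)}
      {t : Option S} :
      FTrans h q z b q' → FSMPath h q' ρ t → FSMPath h q ((z, b) :: ρ) t

/-- The language of global traces of `𝓕(N)` (all states final, so every path
from the initial state yields a trace). -/
def FSMLang {A S : Type} (init : S) (h : S → A → S → Prop) : Set (List (A × Bool)) :=
  { ρ | ∃ t : Option S, FSMPath h (some init) ρ t }

/-- `~` for global traces of `𝓕(N)`: the inputs occur at ports `1,…,r`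
(given by `tape`) and the outputs at port `r+1`, so two traces are equivalent
iff their input projections agree on every tape and their output sequences at
port `r+1` coincide. -/
def FSMEquiv {A : Type} {r : ℕ} (tape : A → Fin r) (ρ ρ' : List (A × Bool)) : Prop :=
  (∀ i : Fin r, (ρ.map Prod.fst).filter (fun a => tape a = i) =
      (ρ'.map Prod.fst).filter (fun a => tape a = i)) ∧
  ρ.map Prod.snd = ρ'.map Prod.snd

/-! A trace of `𝓕(N)` follows a path of `N` with arbitrary output bits, possibly falling into the
sink at some point, after which all outputs are `0`. For `⇒`, the part along `N` is replaced by a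
tape-equivalent word of `M` carrying the same bits, and the rest is replayed in `𝓕(M)` with
outputs `0`. For `⇐`, a word of `N` read with all outputs `1` is a trace of `𝓕(N)`; an equivalent
trace of `𝓕(M)` also has only outputs `1`, so it never leaves the transitions of `M`, and its
input word is a tape-equivalent word of `M`. -/

theorem List.length_eq_of_forall_filter_eq {A ι : Type} [Fintype ι] [DecidableEq ι] (f : A → ι)
    {l l' : List A} (h : ∀ i, l.filter (fun a => f a = i) = l'.filter (fun a => f a = i)) :
    l.length = l'.length := by
  have length_eq_sum : ∀ l : List A, l.length = ∑ i, (l.filter (fun a => f a = i)).length := by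
    intro l
    rw [← List.length_map (f := f), ← Multiset.coe_card,
      ← Multiset.sum_count_eq_card (s := Finset.univ) (by simp)]
    refine Finset.sum_congr rfl fun i _ => ?_
    rw [Multiset.coe_count, List.count, List.countP_map, List.countP_eq_length_filter]
    rfl
  rw [length_eq_sum l, length_eq_sum l']
  simp only [h]

namespace FSMPath

variable {A S : Type} {h : S → A → S → Prop}

lemma append {q q' q'' : Option S} {ρ ρ' : List (A × Bool)}
    (p : FSMPath h q ρ q') (p' : FSMPath h q' ρ' q'') : FSMPath h q (ρ ++ ρ') q'' := by
  induction p with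
  | nil => exact p'
  | cons hst _ ih => exact cons hst (ih p')

lemma of_isPath {s t : S} {ρ : List (A × Bool)} (p : IsPath h s (ρ.map Prod.fst) t) :
    FSMPath h (some s) ρ (some t) := by
  induction ρ generalizing s with
  | nil => cases p; exact nil _
  | cons x ρ ih =>
    cases p with
    | cons hs p' => exact cons (q' := some _) hs (ih p')

/-- Every input can be read with output `0`: along a transition of the FA if there is one,
otherwise by falling into the sink. -/
lemma exists_of_forall_snd_eq_false (q : Option S) {τ : List (A × Bool)}
    (hτ : ∀ x ∈ τ, x.2 = false) : ∃ q', FSMPath h q τ q' := by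
  induction τ generalizing q with
  | nil => exact ⟨q, nil q⟩
  | cons x τ ih =>
    obtain ⟨hx, hrest⟩ := List.forall_mem_cons.1 hτ
    obtain ⟨z, b⟩ := x
    obtain rfl : b = false := hx
    obtain ⟨q', hq'⟩ : ∃ q', FTrans h q z false q' := by
      cases q with
      | none => exact ⟨none, rfl⟩
      | some s =>
        by_cases hs : ∃ s', h s z s'
        · obtain ⟨s', hs'⟩ := hs
          exact ⟨some s', hs'⟩
        · exact ⟨none, hs, rfl⟩
    obtain ⟨q'', p⟩ := ih q' hrest
    exact ⟨q'', cons hq' p⟩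

lemma snd_eq_false_of_sink {ρ : List (A × Bool)} {q : Option S} (p : FSMPath h none ρ q) :
    ∀ x ∈ ρ, x.2 = false := by
  induction ρ generalizing q with
  | nil => simp
  | cons x ρ ih =>
    cases p with
    | @cons _ _ _ q' _ _ hst p' =>
      cases q' with
      | none => exact List.forall_mem_cons.2 ⟨hst, ih p'⟩
      | some _ => exact hst.elim

lemma exists_isPath_prefix {s : S} {ρ : List (A × Bool)} {q : Option S}
    (p : FSMPath h (some s) ρ q) :
    ∃ ρ₁ ρ₂ t, ρ = ρ₁ ++ ρ₂ ∧ IsPath h s (ρ₁.map Prod.fst) t ∧ ∀ x ∈ ρ₂, x.2 = false := by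
  induction ρ generalizing s with
  | nil => exact ⟨[], [], s, rfl, .nil s, by simp⟩
  | cons x ρ ih =>
    cases p with
    | @cons _ _ _ q' _ _ hst p' =>
      cases q' with
      | none =>
        exact ⟨[], _, s, rfl, .nil s, List.forall_mem_cons.2 ⟨hst.2, snd_eq_false_of_sink p'⟩⟩
      | some _ =>
        obtain ⟨ρ₁, ρ₂, t, rfl, hp, hρ₂⟩ := ih p'
        exact ⟨_ :: ρ₁, ρ₂, t, rfl, .cons hst hp, hρ₂⟩

lemma exists_isPath_of_forall_snd_eq_true {s : S} {ρ : List (A × Bool)} {q : Option S}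
    (p : FSMPath h (some s) ρ q) (hρ : ∀ x ∈ ρ, x.2 = true) :
    ∃ t, IsPath h s (ρ.map Prod.fst) t := by
  induction ρ generalizing s with
  | nil => exact ⟨s, .nil s⟩
  | cons x ρ ih =>
    rw [List.forall_mem_cons] at hρ
    cases p with
    | @cons _ _ _ q' _ _ hst p' =>
      cases q' with
      | none => exact absurd (hst.2.symm.trans hρ.1) Bool.false_ne_true
      | some _ =>
        obtain ⟨t, hp⟩ := ih p' hρ.2
        exact ⟨t, .cons hst hp⟩

end FSMPath

lemma FSMEquiv.append_right {A : Type} {r : ℕ} {tape : A → Fin r} {ρ ρ' : List (A × Bool)}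
    (e : FSMEquiv tape ρ ρ') (τ : List (A × Bool)) : FSMEquiv tape (ρ ++ τ) (ρ' ++ τ) :=
  ⟨fun i => by simp only [List.map_append, List.filter_append, e.1 i],
    by simp only [List.map_append, e.2]⟩

/-- The tape-equivalent word of `M` has the same length, so it can carry the same output bits. -/
lemma exists_fsmPath_equiv_of_subset {A : Type} {r : ℕ} (tape : A → Fin r) {S₁ S₂ : Type}
    {init₁ : S₁} {init₂ : S₂} {h₁ : S₁ → A → S₁ → Prop} {h₂ : S₂ → A → S₂ → Prop}
    (H : TupleLang tape init₁ h₁ ⊆ TupleLang tape init₂ h₂)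
    {ρ : List (A × Bool)} {t : S₁} (p : IsPath h₁ init₁ (ρ.map Prod.fst) t) :
    ∃ ρ' t', FSMPath h₂ (some init₂) ρ' (some t') ∧ FSMEquiv tape ρ ρ' := by
  obtain ⟨σ, t', p', hσ⟩ := H ⟨_, t, p, fun _ => rfl⟩
  have hlen : σ.length = (ρ.map Prod.snd).length := by
    simpa using List.length_eq_of_forall_filter_eq tape hσ
  refine ⟨σ.zip (ρ.map Prod.snd), t', .of_isPath ?_, fun i => ?_, ?_⟩
  · rwa [List.map_fst_zip hlen.le]
  · rw [List.map_fst_zip hlen.le, hσ i]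
  · rw [List.map_snd_zip hlen.ge]

theorem tuple_lang_subset_iff_strong_conf_general {A : Type} {r : ℕ} (tape : A → Fin r)
    {S₁ : Type} (init₁ : S₁) (h₁ : S₁ → A → S₁ → Prop)
    {S₂ : Type} (init₂ : S₂) (h₂ : S₂ → A → S₂ → Prop) :
    TupleLang tape init₁ h₁ ⊆ TupleLang tape init₂ h₂ ↔
      (∀ ρ ∈ FSMLang init₁ h₁, ∃ ρ' ∈ FSMLang init₂ h₂, FSMEquiv tape ρ ρ') := by
  constructor
  · rintro H ρ ⟨q, p⟩
    obtain ⟨ρ₁, τ, t, rfl, p₁, hτ⟩ := p.exists_isPath_prefix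
    obtain ⟨ρ₁', t', p₁', e⟩ := exists_fsmPath_equiv_of_subset tape H p₁
    obtain ⟨q', pτ⟩ := FSMPath.exists_of_forall_snd_eq_false (h := h₂) (some t') hτ
    exact ⟨ρ₁' ++ τ, ⟨q', p₁'.append pτ⟩, e.append_right τ⟩
  · rintro C w ⟨σ, t, p, hw⟩
    obtain rfl : (fun i => σ.filter (fun a => tape a = i)) = w := funext hw
    have hfst : (σ.map (·, true)).map Prod.fst = σ := by simp [Function.comp_def]
    obtain ⟨ρ', ⟨q, p'⟩, e⟩ := C (σ.map (·, true)) ⟨some t, .of_isPath (by rwa [hfst])⟩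
    have htrue : ∀ x ∈ ρ', x.2 = true := by
      intro x hx
      have hx' : x.2 ∈ (σ.map (·, true)).map Prod.snd := e.2 ▸ List.mem_map_of_mem hx
      simp only [List.map_map, List.mem_map, Function.comp_apply, Bool.true_eq,
        exists_and_right] at hx'
      exact hx'.2
    obtain ⟨t', p''⟩ := p'.exists_isPath_of_forall_snd_eq_true htrue
    exact ⟨ρ'.map Prod.fst, t', p'', fun i => by rw [← e.1 i, hfst]⟩

/-- `𝓛(N) ⊆ 𝓛(M)` iff `𝓕(N) ⊑_s 𝓕(M)`. -/
theorem tuple_lang_subset_iff_strong_conf {A : Type} {r : ℕ} (tape : A → Fin r)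
    {S₁ : Type} [Fintype S₁] (init₁ : S₁) (h₁ : S₁ → A → S₁ → Prop)
    {S₂ : Type} [Fintype S₂] (init₂ : S₂) (h₂ : S₂ → A → S₂ → Prop) :
    TupleLang tape init₁ h₁ ⊆ TupleLang tape init₂ h₂ ↔
      (∀ ρ ∈ FSMLang init₁ h₁, ∃ ρ' ∈ FSMLang init₂ h₂, FSMEquiv tape ρ ρ') :=
  tuple_lang_subset_iff_strong_conf_general tape init₁ h₁ init₂ h₂
end

section
/- If every transition of FSMs M and N produces a (non-null) output at every port, then for traces σ, σ' ∈ L(N) ∪ L(M), σ ~ σ' implies σ = σ'; consequently N ⊑_s M if and only if L(N) ⊆ L(M). -/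
/-! Each transition contributes an output at every port, so the local trace at any port
reveals the number of transitions, and the local trace at the port of the first input
starts with that input. Reading off the first transition at every port recovers it
completely, and induction on the trace shows that the local traces determine the global
trace. -/

/-- A transition of an FSM in which every transition produces output at every
port: an input `x` (at port `portIn x`) together with an output `y p` at every
port `p`.  The local trace at port `p` of a global trace lists, for each
transition, the input (if it is at `p`) followed by the output at `p`. -/
def localTr {In Out P : Type} [DecidableEq P] (portIn : In → P) (p : P)
    (σ : List (In × (P → Out))) : List (In ⊕ Out) :=
  σ.flatMap (fun s =>
    (if portIn s.1 = p then [Sum.inl s.1] else []) ++ [Sum.inr (s.2 p)])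

section LocalTrace

variable {In Out P : Type} [DecidableEq P] (portIn : In → P)

theorem localTr_cons (p : P) (s : In × (P → Out)) (t : List (In × (P → Out))) :
    localTr portIn p (s :: t) =
      (if portIn s.1 = p then [Sum.inl s.1] else []) ++ Sum.inr (s.2 p) :: localTr portIn p t := by
  simp [localTr]

theorem localTr_cons_ne_nil (p : P) (s : In × (P → Out)) (t : List (In × (P → Out))) :
    localTr portIn p (s :: t) ≠ [] := by
  simp [localTr_cons]

theorem localTr_cons_self (s : In × (P → Out)) (t : List (In × (P → Out))) :
    (localTr portIn (portIn s.1) (s :: t)).head? = some (Sum.inl s.1) := by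
  simp [localTr_cons]

theorem localTr_cons_of_ne {p : P} {s : In × (P → Out)} (hp : portIn s.1 ≠ p)
    (t : List (In × (P → Out))) :
    localTr portIn p (s :: t) = Sum.inr (s.2 p) :: localTr portIn p t := by
  simp [localTr_cons, hp]

theorem fst_eq_of_localTr_cons_eq {s s' : In × (P → Out)} {t t' : List (In × (P → Out))}
    (h : ∀ p, localTr portIn p (s :: t) = localTr portIn p (s' :: t')) : s.1 = s'.1 := by
  have hhead := localTr_cons_self portIn s t
  rw [h] at hhead
  by_cases hport : portIn s'.1 = portIn s.1
  · simpa [localTr_cons, hport] using hhead.symm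
  · simp [localTr_cons_of_ne portIn hport] at hhead

theorem eq_and_localTr_eq_of_localTr_cons_eq {s s' : In × (P → Out)}
    {t t' : List (In × (P → Out))}
    (h : ∀ p, localTr portIn p (s :: t) = localTr portIn p (s' :: t')) :
    s = s' ∧ ∀ p, localTr portIn p t = localTr portIn p t' := by
  have hfst := fst_eq_of_localTr_cons_eq portIn h
  have hsnd : ∀ p, s.2 p = s'.2 p ∧ localTr portIn p t = localTr portIn p t' := fun p => by
    simpa [localTr_cons, hfst] using h p
  exact ⟨Prod.ext hfst (funext fun p => (hsnd p).1), fun p => (hsnd p).2⟩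

theorem localTr_injective [Nonempty P] :
    Function.Injective fun (σ : List (In × (P → Out))) (p : P) => localTr portIn p σ := by
  intro σ
  induction σ with
  | nil =>
    rintro (_ | ⟨s', t'⟩) h
    · rfl
    · exact absurd (congrFun h (Classical.arbitrary P)).symm (localTr_cons_ne_nil portIn _ s' t')
  | cons s t ih =>
    rintro (_ | ⟨s', t'⟩) h
    · exact absurd (congrFun h (Classical.arbitrary P)) (localTr_cons_ne_nil portIn _ s t)
    · obtain ⟨rfl, htail⟩ := eq_and_localTr_eq_of_localTr_cons_eq portIn (congrFun h)
      rw [ih (funext htail)]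

end LocalTrace

/-- if every transition produces output at every port then traces
of `L(N) ∪ L(M)` that are `~`-equivalent are equal; consequently `N ⊑_s M` iff
`L(N) ⊆ L(M)`. -/
theorem strong_conf_iff_subset_of_full_output {In Out P : Type} [DecidableEq P]
    [Nonempty P] (portIn : In → P) (LN LM : Set (List (In × (P → Out)))) :
    (∀ σ ∈ LN ∪ LM, ∀ σ' ∈ LN ∪ LM,
        (∀ p : P, localTr portIn p σ = localTr portIn p σ') → σ = σ') ∧
    ((∀ σ ∈ LN, ∃ σ' ∈ LM, ∀ p : P, localTr portIn p σ = localTr portIn p σ') ↔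
        LN ⊆ LM) := by
  refine ⟨fun σ _ σ' _ h => localTr_injective portIn (funext h), ?_⟩
  constructor
  · intro h σ hσ
    obtain ⟨σ', hσ', heq⟩ := h σ hσ
    rwa [localTr_injective portIn (funext heq)]
  · exact fun h σ hσ => ⟨σ, h hσ, fun _ => rfl⟩
end
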